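/- Let X be a Lévy process with X_t = μt + σW_t + S_t where W is a Brownian motion and S an independent pure-jump Lévy process. Given the equidistant grid t_k = k·h_n on [0, T_n] with T_n = n·h_n and a permutation i^n of {1,...,n}, define the quasi-process X̂^n_t = u + ∑_{k=1}^n Δ_{i^n(k)}X · 1_{[t_k,∞)}(t). If h_n → 0 and n·h_n → ∞, then for every fixed s < t, X̂^n_t − X̂^n_s converges in distribution to X_t − X_s. -/

import Mathlib

/-!
The increment of the quasi-process over `(s, t]` is the sum of the grid increments
`Δ_j X`, `j ∈ σ(A)`, where `A` is the set of cells whose right end point lies in `(s, t]`.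
By independence and stationarity of increments any sum of `m` distinct grid increments has the
law of `X_{m h}`, whatever the permutation; so the quasi-increment has the law of `X_{a_n}` with
`a_n = #A · h_n = (⌊t / h_n⌋ - ⌊s / h_n⌋) h_n` once `n h_n ≥ t`. Since `a_n → t - s`, stochastic
continuity gives `X_{a_n} → X_{t-s}` in probability, hence in distribution, and `X_{t-s}` has the
law of `X_t - X_s`.
-/

open MeasureTheory ProbabilityTheory Filter Topology Finset

lemma ProbabilityTheory.IdentDistrib.add_of_indepFun {Ω Ω' E : Type*} [MeasurableSpace Ω]
    [MeasurableSpace Ω'] [MeasurableSpace E] [Add E] [MeasurableAdd₂ E]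
    {μ : Measure Ω} {ν : Measure Ω'} [IsFiniteMeasure μ] [IsFiniteMeasure ν]
    {f g : Ω → E} {f' g' : Ω' → E} (hf : IdentDistrib f f' μ ν) (hg : IdentDistrib g g' μ ν)
    (hfg : IndepFun f g μ) (hfg' : IndepFun f' g' ν) :
    IdentDistrib (f + g) (f' + g') μ ν := by
  have hpair : IdentDistrib (fun ω ↦ (f ω, g ω)) (fun ω ↦ (f' ω, g' ω)) μ ν :=
    ⟨hf.aemeasurable_fst.prodMk hg.aemeasurable_fst,
      hf.aemeasurable_snd.prodMk hg.aemeasurable_snd, by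
      rw [hfg.map_prod_eq_prod_map_map hf.aemeasurable_fst hg.aemeasurable_fst,
        hfg'.map_prod_eq_prod_map_map hf.aemeasurable_snd hg.aemeasurable_snd,
        hf.map_eq, hg.map_eq]⟩
  exact hpair.comp measurable_add

lemma MeasureTheory.TendstoInMeasure.tendsto_integral_comp {Ω ι E : Type*} [MeasurableSpace Ω]
    {P : Measure Ω} [IsProbabilityMeasure P] [PseudoEMetricSpace E] [MeasurableSpace E]
    [BorelSpace E] {l : Filter ι} [l.IsCountablyGenerated] [l.NeBot] {Y : ι → Ω → E}
    {Z : Ω → E} (h : TendstoInMeasure P Y l Z) (hY : ∀ i, AEMeasurable (Y i) P)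
    (g : BoundedContinuousFunction E ℝ) :
    Tendsto (fun i ↦ ∫ ω, g (Y i ω) ∂P) l (𝓝 (∫ ω, g (Z ω) ∂P)) := by
  have hdist := h.tendstoInDistribution hY
  have := ProbabilityMeasure.tendsto_iff_forall_integral_tendsto.1 hdist.tendsto g
  simp only [ProbabilityMeasure.coe_mk] at this
  rw [integral_map hdist.aemeasurable_limit (by fun_prop)] at this
  simpa only [integral_map (hY _) g.continuous.aestronglyMeasurable] using this

lemma Finset.sum_ite_le_sub_sum_ite_le {ι α M : Type*} [LinearOrder α] [AddCommGroup M]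
    (S : Finset ι) (x : ι → α) (f : ι → M) {s t : α} (hst : s ≤ t) :
    ∑ k ∈ S, (if x k ≤ t then f k else 0) - ∑ k ∈ S, (if x k ≤ s then f k else 0) =
      ∑ k ∈ S with x k ∈ Set.Ioc s t, f k := by
  rw [← sum_sub_distrib, sum_filter]
  refine sum_congr rfl fun k _ ↦ ?_
  by_cases hks : x k ≤ s
  · simp [hks, hks.trans hst, not_lt.2 hks]
  · simp [hks, lt_of_not_ge hks]

lemma add_one_mul_mem_Ioc_iff {h s t : ℝ} (hh : 0 < h) (hs : 0 ≤ s) (ht : 0 ≤ t) (k : ℕ) :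
    (k + 1) * h ∈ Set.Ioc s t ↔ k ∈ Ico ⌊s / h⌋₊ ⌊t / h⌋₊ := by
  rw [Set.mem_Ioc, mem_Ico, ← Nat.lt_succ_iff, Nat.floor_lt (by positivity), Nat.succ_eq_add_one,
    Nat.add_one_le_iff.symm, Nat.le_floor_iff (by positivity), div_lt_iff₀ hh, le_div_iff₀ hh]
  push_cast
  rfl

lemma card_filter_add_one_mul_mem_Ioc {n : ℕ} {h s t : ℝ} (hh : 0 < h) (hs : 0 ≤ s)
    (hst : s ≤ t) (htn : t ≤ n * h) :
    #{k : Fin n | ((k : ℕ) + 1) * h ∈ Set.Ioc s t} = ⌊t / h⌋₊ - ⌊s / h⌋₊ := by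
  have hfloor : ⌊t / h⌋₊ ≤ n := Nat.floor_le_of_le ((div_le_iff₀ hh).2 htn)
  rw [← Nat.card_Ico, ← card_map Fin.valEmbedding]
  congr 1
  ext j
  simp only [Finset.mem_map, mem_filter, mem_univ, true_and, Fin.valEmbedding_apply,
    add_one_mul_mem_Ioc_iff hh hs (hs.trans hst)]
  constructor
  · rintro ⟨k, hk, rfl⟩
    exact hk
  · intro hj
    exact ⟨⟨j, (mem_Ico.1 hj).2.trans_le hfloor⟩, hj, rfl⟩

lemma tendsto_nat_floor_div_mul {ι : Type*} {l : Filter ι} {h : ι → ℝ} (hpos : ∀ i, 0 < h i)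
    (h0 : Tendsto h l (𝓝 0)) {r : ℝ} (hr : 0 ≤ r) :
    Tendsto (fun i ↦ ⌊r / h i⌋₊ * h i) l (𝓝 r) := by
  have hlower : Tendsto (fun i ↦ r - h i) l (𝓝 r) := by simpa using tendsto_const_nhds.sub h0
  refine tendsto_of_tendsto_of_tendsto_of_le_of_le hlower tendsto_const_nhds (fun i ↦ ?_)
    (fun i ↦ ?_)
  · have := (div_lt_iff₀ (hpos i)).1 (Nat.lt_floor_add_one (r / h i))
    linarith
  · exact (le_div_iff₀ (hpos i)).1 (Nat.floor_le (by have := hpos i; positivity))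

lemma tendsto_card_filter_add_one_mul_mem_Ioc_mul {h : ℕ → ℝ} (hpos : ∀ n, 0 < h n)
    (h0 : Tendsto h atTop (𝓝 0)) (hT : Tendsto (fun n : ℕ ↦ n * h n) atTop atTop) {s t : ℝ}
    (hs : 0 ≤ s) (hst : s ≤ t) :
    Tendsto (fun n ↦ (#{k : Fin n | ((k : ℕ) + 1) * h n ∈ Set.Ioc s t} : ℝ) * h n) atTop
      (𝓝 (t - s)) := by
  refine ((tendsto_nat_floor_div_mul hpos h0 (hs.trans hst)).sub
    (tendsto_nat_floor_div_mul hpos h0 hs)).congr' ?_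
  filter_upwards [hT.eventually_ge_atTop t] with n htn
  have hfloor : ⌊s / h n⌋₊ ≤ ⌊t / h n⌋₊ := Nat.floor_le_floor (by gcongr; exact (hpos n).le)
  rw [card_filter_add_one_mul_mem_Ioc (hpos n) hs hst htn, Nat.cast_sub hfloor, sub_mul]

lemma ProbabilityTheory.hasIndepIncrements_of_forall_monotone {Ω T E : Type*}
    [MeasurableSpace Ω] {P : Measure Ω} [Preorder T] [MeasurableSpace E] [Sub E] {X : T → Ω → E}
    (h : ∀ (m : ℕ) (τ : ℕ → T), Monotone τ →
      iIndepFun (fun i : Fin m ↦ fun ω ↦ X (τ ((i : ℕ) + 1)) ω - X (τ (i : ℕ)) ω) P) :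
    HasIndepIncrements X P := by
  intro n t ht
  have hτ : Monotone fun k : ℕ ↦ t ⟨min k n, by omega⟩ := fun i j hij ↦
    ht (Fin.mk_le_mk.2 (min_le_min_right n hij))
  convert h n _ hτ using 4 with i ω <;> congr <;> ext <;> simp

section Levy

variable {Ω : Type*} [MeasurableSpace Ω] {P : Measure Ω} {X : ℝ → Ω → ℝ}

def HasStationaryIncrements (X : ℝ → Ω → ℝ) (P : Measure Ω) : Prop :=
  ∀ s t : ℝ, 0 ≤ s → s ≤ t → IdentDistrib (fun ω ↦ X t ω - X s ω) (X (t - s)) P P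

def gridIncrement (X : ℝ → Ω → ℝ) (h : ℝ) (k : ℕ) : Ω → ℝ :=
  fun ω ↦ X ((k + 1) * h) ω - X (k * h) ω

/-- The paper's `X̂^n_t`, with 0-based cells: cell `k : Fin n` is `(k h, (k + 1) h]` and enters
at `t_{k+1} = (k + 1) h`. -/
noncomputable def quasiProcess (X : ℝ → Ω → ℝ) (h : ℝ) {n : ℕ} (σ : Equiv.Perm (Fin n))
    (u t : ℝ) : Ω → ℝ :=
  fun ω ↦ u + ∑ k : Fin n, if ((k : ℕ) + 1) * h ≤ t then gridIncrement X h (σ k) ω else 0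

lemma HasStationaryIncrements.aemeasurable (hstat : HasStationaryIncrements X P) {t : ℝ}
    (ht : 0 ≤ t) : AEMeasurable (X t) P := by
  simpa using (hstat 0 t le_rfl ht).aemeasurable_snd

lemma HasStationaryIncrements.identDistrib_gridIncrement (hstat : HasStationaryIncrements X P)
    {h : ℝ} (hh : 0 ≤ h) (k : ℕ) : IdentDistrib (gridIncrement X h k) (X h) P P := by
  have := hstat (k * h) ((k + 1) * h) (by positivity) (by nlinarith)
  rwa [show ((k : ℝ) + 1) * h - k * h = h by ring] at this

lemma ProbabilityTheory.HasIndepIncrements.iIndepFun_gridIncrement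
    (hindep : HasIndepIncrements X P) {h : ℝ} (hh : 0 ≤ h) : iIndepFun (gridIncrement X h) P := by
  have hτ : Monotone fun k : ℕ ↦ (k : ℝ) * h := fun _ _ hij ↦
    mul_le_mul_of_nonneg_right (Nat.cast_le.2 hij) hh
  unfold gridIncrement
  simpa using hindep.nat hτ

lemma identDistrib_add_of_indepFun [IsProbabilityMeasure P] (hzero : ∀ᵐ ω ∂P, X 0 ω = 0)
    (hindep : HasIndepIncrements X P) (hstat : HasStationaryIncrements X P)
    {U V : Ω → ℝ} {ℓ₁ ℓ₂ : ℝ} (hℓ₁ : 0 ≤ ℓ₁) (hℓ₂ : 0 ≤ ℓ₂)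
    (hU : IdentDistrib U (X ℓ₁) P P) (hV : IdentDistrib V (X ℓ₂) P P) (hUV : IndepFun U V P) :
    IdentDistrib (U + V) (X (ℓ₁ + ℓ₂)) P P := by
  -- Replace `U`, `V` by the adjacent increments over `[0, ℓ₁]`, `[ℓ₁, ℓ₁ + ℓ₂]`, which telescope.
  have hU' : IdentDistrib U (X ℓ₁ - X 0) P P := by
    have := hstat 0 ℓ₁ le_rfl hℓ₁
    rw [sub_zero] at this
    exact hU.trans this.symm
  have hV' : IdentDistrib V (X (ℓ₁ + ℓ₂) - X ℓ₁) P P := by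
    have := hstat ℓ₁ (ℓ₁ + ℓ₂) hℓ₁ (by linarith)
    rw [add_sub_cancel_left] at this
    exact hV.trans this.symm
  have hsum := hU'.add_of_indepFun hV' hUV (hindep.indepFun_sub_sub hℓ₁ (by linarith))
  refine hsum.trans (IdentDistrib.of_ae_eq hsum.aemeasurable_snd ?_)
  filter_upwards [hzero] with ω hω
  simp [hω]

lemma identDistrib_sum_gridIncrement [IsProbabilityMeasure P] (hzero : ∀ᵐ ω ∂P, X 0 ω = 0)
    (hindep : HasIndepIncrements X P) (hstat : HasStationaryIncrements X P)
    {h : ℝ} (hh : 0 ≤ h) (B : Finset ℕ) :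
    IdentDistrib (∑ k ∈ B, gridIncrement X h k) (X (#B * h)) P P := by
  induction B using Finset.induction_on with
  | empty =>
    refine IdentDistrib.of_ae_eq aemeasurable_const ?_
    filter_upwards [hzero] with ω hω
    simp [hω]
  | insert a B ha ih =>
    have hindepB : IndepFun (gridIncrement X h a) (∑ k ∈ B, gridIncrement X h k) P :=
      ((hindep.iIndepFun_gridIncrement hh).indepFun_finsetSum_of_notMem₀
        (fun k ↦ (hstat.identDistrib_gridIncrement hh k).aemeasurable_fst) ha).symm
    rw [sum_insert ha, card_insert_of_notMem ha, Nat.cast_succ, add_one_mul, add_comm _ h]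
    exact identDistrib_add_of_indepFun hzero hindep hstat hh (by positivity)
      (hstat.identDistrib_gridIncrement hh a) ih hindepB

lemma identDistrib_quasiProcess_sub [IsProbabilityMeasure P] (hzero : ∀ᵐ ω ∂P, X 0 ω = 0)
    (hindep : HasIndepIncrements X P) (hstat : HasStationaryIncrements X P)
    {h : ℝ} (hh : 0 ≤ h) {n : ℕ} (σ : Equiv.Perm (Fin n)) (u : ℝ) {s t : ℝ} (hst : s ≤ t) :
    IdentDistrib (quasiProcess X h σ u t - quasiProcess X h σ u s)
      (X (#{k : Fin n | ((k : ℕ) + 1) * h ∈ Set.Ioc s t} * h)) P P := by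
  have hsum := identDistrib_sum_gridIncrement hzero hindep hstat hh
    ((({k : Fin n | ((k : ℕ) + 1) * h ∈ Set.Ioc s t} : Finset (Fin n)).map σ.toEmbedding).map
      Fin.valEmbedding)
  rw [card_map, card_map] at hsum
  convert hsum using 1
  ext ω
  rw [Pi.sub_apply, quasiProcess, quasiProcess, add_sub_add_left_eq_sub,
    sum_ite_le_sub_sum_ite_le _ (fun k : Fin n ↦ ((k : ℕ) + 1) * h) _ hst, Finset.sum_apply,
    sum_map, sum_map]
  rfl

end Levy

theorem stmt_15_general {Ω : Type*} [MeasurableSpace Ω] (P : Measure Ω) [IsProbabilityMeasure P]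
    (X : ℝ → Ω → ℝ)
    (hzero : ∀ᵐ ω ∂P, X 0 ω = 0)
    (hindep : ∀ (m : ℕ) (τ : ℕ → ℝ), Monotone τ →
      iIndepFun
        (fun i : Fin m => fun ω => X (τ ((i : ℕ) + 1)) ω - X (τ (i : ℕ)) ω) P)
    (hstat : ∀ s t : ℝ, 0 ≤ s → s ≤ t →
      IdentDistrib (fun ω => X t ω - X s ω) (X (t - s)) P P)
    (hcont : ∀ (t : ℝ) (a : ℕ → ℝ), Tendsto a atTop (nhds t) →
      TendstoInMeasure P (fun n => X (a n)) atTop (X t))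
    (hn : ℕ → ℝ) (hnpos : ∀ n, 0 < hn n)
    (hn0 : Tendsto hn atTop (nhds 0))
    (hnT : Tendsto (fun n : ℕ => (n : ℝ) * hn n) atTop atTop)
    (σ : ∀ n : ℕ, Equiv.Perm (Fin n)) (u s t : ℝ) (hs : 0 ≤ s) (hst : s < t) :
    ∀ g : BoundedContinuousFunction ℝ ℝ,
      Tendsto
        (fun n => ∫ ω, g
          ((u + ∑ k : Fin n, (if ((k : ℕ) + 1) * hn n ≤ t then
              X ((((σ n k : Fin n) : ℕ) + 1) * hn n) ω - X (((σ n k : Fin n) : ℕ) * hn n) ω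
            else 0))
          - (u + ∑ k : Fin n, (if ((k : ℕ) + 1) * hn n ≤ s then
              X ((((σ n k : Fin n) : ℕ) + 1) * hn n) ω - X (((σ n k : Fin n) : ℕ) * hn n) ω
            else 0))) ∂P)
        atTop (nhds (∫ ω, g (X t ω - X s ω) ∂P)) := by
  intro g
  have hX : HasIndepIncrements X P := hasIndepIncrements_of_forall_monotone hindep
  have hlen := tendsto_card_filter_add_one_mul_mem_Ioc_mul hnpos hn0 hnT hs hst.le
  have hlim := (hcont _ _ hlen).tendsto_integral_comp
    (fun n ↦ HasStationaryIncrements.aemeasurable hstat (by have := hnpos n; positivity)) g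
  rw [show ∫ ω, g (X t ω - X s ω) ∂P = ∫ ω, g (X (t - s) ω) ∂P from
    ((hstat s t hs hst.le).comp g.continuous.measurable).integral_eq]
  refine hlim.congr fun n ↦ ?_
  exact (((identDistrib_quasiProcess_sub hzero hX hstat (hnpos n).le (σ n) u hst.le).comp
    g.continuous.measurable).integral_eq).symm

/-- For a Lévy process `X` (stationary independent increments, `X_0 = 0`, stochastically
continuous), equidistant grids `t_k = k·h_n` with `h_n → 0` and `n·h_n → ∞`, permutations
`i^n`, and the quasi-process `X̂^n_t = u + ∑_{k=1}^n Δ_{i^n(k)}X · 1_{[t_k,∞)}(t)`: for any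
fixed `0 ≤ s < t`, the increment `X̂^n_t - X̂^n_s` converges in distribution to `X_t - X_s`. -/
theorem stmt_15 {Ω : Type*} [MeasurableSpace Ω] (P : Measure Ω) [IsProbabilityMeasure P]
    (X : ℝ → Ω → ℝ)
    (hmeas : ∀ t, Measurable (X t))
    (hzero : ∀ᵐ ω ∂P, X 0 ω = 0)
    (hindep : ∀ (m : ℕ) (τ : ℕ → ℝ), Monotone τ →
      iIndepFun
        (fun i : Fin m => fun ω => X (τ ((i : ℕ) + 1)) ω - X (τ (i : ℕ)) ω) P)
    (hstat : ∀ s t : ℝ, 0 ≤ s → s ≤ t →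
      IdentDistrib (fun ω => X t ω - X s ω) (X (t - s)) P P)
    (hcont : ∀ (t : ℝ) (a : ℕ → ℝ), Tendsto a atTop (nhds t) →
      TendstoInMeasure P (fun n => X (a n)) atTop (X t))
    (hn : ℕ → ℝ) (hnpos : ∀ n, 0 < hn n)
    (hn0 : Tendsto hn atTop (nhds 0))
    (hnT : Tendsto (fun n : ℕ => (n : ℝ) * hn n) atTop atTop)
    (σ : ∀ n : ℕ, Equiv.Perm (Fin n)) (u s t : ℝ) (hs : 0 ≤ s) (hst : s < t) :
    ∀ g : BoundedContinuousFunction ℝ ℝ,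
      Tendsto
        (fun n => ∫ ω, g
          ((u + ∑ k : Fin n, (if ((k : ℕ) + 1) * hn n ≤ t then
              X ((((σ n k : Fin n) : ℕ) + 1) * hn n) ω - X (((σ n k : Fin n) : ℕ) * hn n) ω
            else 0))
          - (u + ∑ k : Fin n, (if ((k : ℕ) + 1) * hn n ≤ s then
              X ((((σ n k : Fin n) : ℕ) + 1) * hn n) ω - X (((σ n k : Fin n) : ℕ) * hn n) ω
            else 0))) ∂P)
        atTop (nhds (∫ ω, g (X t ω - X s ω) ∂P)) :=
  stmt_15_general P X hzero hindep hstat hcont hn hnpos hn0 hnT σ u s t hs hst
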